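/- Define f_p^W : ℕ → ℕ for p ≥ 1 by f_1^W(ω) = 1 and f_{p+1}^W(ω) = C(ω,2)·f_p^W(ω) + ω. Then every pK₂-free graph G satisfies χ(G) ≤ f_p^W(ω(G)). In particular, every 2K₂-free graph G satisfies χ(G) ≤ C(ω(G)+1, 2). -/

import Mathlib

open SimpleGraph

/-- `pK₂`: the disjoint union of `p` copies of the single-edge graph `K₂`. -/
def pK2 (p : ℕ) : SimpleGraph (Fin p × Fin 2) where
  Adj x y := x.1 = y.1 ∧ x.2 ≠ y.2
  symm := ⟨fun _ _ h => ⟨h.1.symm, h.2.symm⟩⟩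
  loopless := ⟨fun _ h => h.2 rfl⟩

/-- Wagon's bounding function: `fW 1 ω = 1` and `fW (p+1) ω = C(ω,2) * fW p ω + ω`
for `p ≥ 1` (the value at `p = 0` is irrelevant). -/
def fW : ℕ → ℕ → ℕ
  | 0, _ => 1
  | 1, _ => 1
  | p + 2, ω => Nat.choose ω 2 * fW (p + 1) ω + ω

/-!
Wagon's argument, by induction on `p`. Fix a maximum clique `K` of `G`, of size `s ≤ ω`. A vertex
outside `K` has a non-neighbour in `K`, so every vertex either misses exactly one vertex `c` of `K`,
or is distinct from and non-adjacent to both ends of an edge `cd` of `K`. The vertices of the first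
kind for a given `c` are independent: an edge between two of them, together with `K \ {c}`, would
form a clique of size `s + 1`. The vertices of the second kind for a given `cd` induce a
`pK₂`-free graph when `G` is `(p+1)K₂`-free, since an induced `pK₂` among them extends by the edge
`cd`. Hence `χ(G) ≤ s + C(s,2) · f_p(ω) ≤ f_{p+1}(ω)`.
-/

namespace SimpleGraph

variable {V W X : Type*} {G : SimpleGraph V} {H : SimpleGraph W} {K : SimpleGraph X}

def Embedding.sumElim (f : G ↪g K) (g : H ↪g K) (hne : ∀ a b, f a ≠ g b)
    (hadj : ∀ a b, ¬K.Adj (f a) (g b)) : G ⊕g H ↪g K where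
  toFun := Sum.elim f g
  inj' := by
    rintro (a | a) (b | b) h
    all_goals simp_all [(hne _ _).symm]
  map_rel_iff' {a b} := by
    change K.Adj (Sum.elim f g a) (Sum.elim f g b) ↔ _
    rcases a with a | a <;> rcases b with b | b
    · simp
    · simpa using hadj a b
    · simpa using fun h => hadj b a h.symm
    · simp

theorem colorable_sum_of_cover {ι : Type*} [Fintype ι] (s : ι → Set V) (n : ι → ℕ)
    (hs : ∀ v, ∃ i, v ∈ s i) (h : ∀ i, (G.induce (s i)).Colorable (n i)) :
    G.Colorable (∑ i, n i) := by
  choose part hpart using hs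
  have C i := (h i).some
  have hC : ∀ i j, i = j → ∀ v w (hv : v ∈ s i) (hw : w ∈ s j), G.Adj v w →
      C i ⟨v, hv⟩ ≍ C j ⟨w, hw⟩ → False := by
    rintro i _ rfl v w hv hw hvw h
    exact (C i).valid (v := ⟨v, hv⟩) (w := ⟨w, hw⟩) hvw (eq_of_heq h)
  let C' : G.Coloring (Σ i, Fin (n i)) :=
    Coloring.mk (fun v => ⟨part v, C (part v) ⟨v, hpart v⟩⟩) fun hvw hc =>
      hC _ _ (congrArg Sigma.fst hc) _ _ _ _ hvw (Sigma.mk.inj_iff.mp hc).2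
  simpa using C'.colorable

theorem CliqueFree.cliqueNum_lt {n : ℕ} (h : G.CliqueFree n) : G.cliqueNum < n := by
  obtain ⟨t, ht⟩ := G.exists_isNClique_cliqueNum
  by_contra! hn
  exact h.mono hn t ht

theorem CliqueFree.cliqueFree_cliqueNum_succ {n : ℕ} (h : G.CliqueFree n) :
    G.CliqueFree (G.cliqueNum + 1) := by
  intro t ht
  have hbdd : BddAbove {m | ∃ s, G.IsNClique m s} :=
    ⟨n, fun m ⟨s, hs⟩ => by by_contra! hm; exact h.mono hm.le s hs⟩
  have : G.cliqueNum + 1 ≤ G.cliqueNum := le_csSup hbdd ⟨t, ht⟩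
  omega

theorem cliqueFree_cliqueNum_succ [Fintype V] (G : SimpleGraph V) :
    G.CliqueFree (G.cliqueNum + 1) :=
  (cliqueFree_of_card_lt (Nat.lt_succ_self _)).cliqueFree_cliqueNum_succ

end SimpleGraph

def pK2SuccIso (p : ℕ) : pK2 p ⊕g pK2 1 ≃g pK2 (p + 1) where
  toEquiv := (Equiv.sumProdDistrib _ _ _).symm.trans (finSumFinEquiv.prodCongr (.refl _))
  map_rel_iff' := by
    rintro (⟨i, a⟩ | ⟨i, a⟩) (⟨j, b⟩ | ⟨j, b⟩)
    all_goals simp [pK2, Fin.ext_iff]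
    all_goals omega

def pK2OneEmbeddingOfAdj {V : Type*} {G : SimpleGraph V} {u v : V} (h : G.Adj u v) :
    pK2 1 ↪g G where
  toFun x := if x.2 = 0 then u else v
  inj' := by
    rintro ⟨i, a⟩ ⟨j, b⟩ hab
    fin_cases i; fin_cases j; fin_cases a <;> fin_cases b <;> simp_all [h.ne, h.ne.symm]
  map_rel_iff' := by
    rintro ⟨i, a⟩ ⟨j, b⟩
    change G.Adj (if a = 0 then u else v) (if b = 0 then u else v) ↔ _
    fin_cases i; fin_cases j; fin_cases a <;> fin_cases b <;> simp [pK2, h, h.symm]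

theorem pK2OneEmbeddingOfAdj_apply_mem {V : Type*} {G : SimpleGraph V} {u v : V} (h : G.Adj u v)
    (x : Fin 1 × Fin 2) : pK2OneEmbeddingOfAdj h x ∈ s(u, v) := by
  change (if x.2 = 0 then u else v) ∈ _
  split_ifs <;> simp

namespace SimpleGraph

variable {V : Type*} {G : SimpleGraph V}

def missOnly (G : SimpleGraph V) (t : Finset V) (c : V) : Set V :=
  {v | ¬G.Adj v c ∧ ∀ d ∈ t, d ≠ c → G.Adj v d}

def missBoth (G : SimpleGraph V) (a : Sym2 V) : Set V :=
  {v | ∀ c ∈ a, v ≠ c ∧ ¬G.Adj v c}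

theorem isEmpty_pK2_induce_missBoth {p : ℕ} {u v : V} (hG : IsEmpty (pK2 (p + 1) ↪g G))
    (huv : G.Adj u v) : IsEmpty (pK2 p ↪g G.induce (G.missBoth s(u, v))) := by
  refine ⟨fun φ => hG.false ((Embedding.sumElim ((Embedding.induce _).comp φ)
    (pK2OneEmbeddingOfAdj huv) ?_ ?_).comp (pK2SuccIso p).symm.toEmbedding)⟩
  · exact fun x b => ((φ x).2 _ (pK2OneEmbeddingOfAdj_apply_mem huv b)).1
  · exact fun x b => ((φ x).2 _ (pK2OneEmbeddingOfAdj_apply_mem huv b)).2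

variable {t : Finset V} {n : ℕ}

theorem not_adj_of_mem_missOnly (ht : G.IsNClique n t) (hmax : G.CliqueFree (n + 1))
    {c x y : V} (hc : c ∈ t) (hx : x ∈ G.missOnly t c) (hy : y ∈ G.missOnly t c) : ¬G.Adj x y := by
  classical
  intro hxy
  have hy' := ht.insert_erase (a := y)
    (fun w hw => hy.2 w (Finset.mem_sdiff.1 hw).1 (by simpa using (Finset.mem_sdiff.1 hw).2)) hc
  refine hmax _ (hy'.insert (a := x) fun b hb => ?_)
  rcases Finset.mem_insert.1 hb with rfl | hb
  · exact hxy
  · exact hx.2 b (Finset.mem_of_mem_erase hb) (Finset.ne_of_mem_erase hb)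

theorem exists_mem_missOnly_or_missBoth (ht : G.IsNClique n t) (hmax : G.CliqueFree (n + 1))
    (v : V) :
    (∃ c ∈ t, v ∈ G.missOnly t c) ∨ ∃ c ∈ t, ∃ d ∈ t, c ≠ d ∧ v ∈ G.missBoth s(c, d) := by
  classical
  by_cases hv : v ∈ t
  · exact .inl ⟨v, hv, G.irrefl, fun d hd hdv => ht.isClique hv hd hdv.symm⟩
  obtain ⟨c, hc, hvc⟩ : ∃ c ∈ t, ¬G.Adj v c := by
    by_contra! h
    exact hmax _ (ht.insert h)
  by_cases hd : ∃ d ∈ t, d ≠ c ∧ ¬G.Adj v d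
  · obtain ⟨d, hd, hdc, hvd⟩ := hd
    refine .inr ⟨c, hc, d, hd, hdc.symm, fun w hw => ?_⟩
    rcases Sym2.mem_iff.1 hw with rfl | rfl
    · exact ⟨fun h => hv (h ▸ hc), hvc⟩
    · exact ⟨fun h => hv (h ▸ hd), hvd⟩
  · push Not at hd
    exact .inl ⟨c, hc, hvc, hd⟩

theorem colorable_add_choose_mul_of_isNClique (ht : G.IsNClique n t)
    (hmax : G.CliqueFree (n + 1)) {m : ℕ}
    (h : ∀ u v, G.Adj u v → (G.induce (G.missBoth s(u, v))).Colorable m) :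
    G.Colorable (n + n.choose 2 * m) := by
  classical
  let parts : t ⊕ {a : Sym2 t // ¬a.IsDiag} → Set V :=
    Sum.elim (fun c => G.missOnly t c) (fun a => G.missBoth (a.1.map (↑)))
  have hcover : ∀ v, ∃ i, v ∈ parts i := by
    intro v
    rcases exists_mem_missOnly_or_missBoth ht hmax v with ⟨c, hc, hv⟩ | ⟨c, hc, d, hd, hcd, hv⟩
    · exact ⟨.inl ⟨c, hc⟩, hv⟩
    · exact ⟨.inr ⟨s(⟨c, hc⟩, ⟨d, hd⟩), by simpa using hcd⟩, by simpa [parts] using hv⟩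
  have hcol : ∀ i, (G.induce (parts i)).Colorable (Sum.elim 1 (fun _ => m) i) := by
    rintro (⟨c, hc⟩ | ⟨a, ha⟩)
    · exact colorable_one_iff.mpr (eq_bot_iff_forall_not_adj.mpr fun x y =>
        not_adj_of_mem_missOnly ht hmax hc x.2 y.2)
    · induction a using Sym2.ind with
      | h c d => simpa [parts] using h c d (ht.isClique c.2 d.2 (by simpa using ha))
  simpa only [Fintype.sum_sum_type, Sum.elim_inl, Sum.elim_inr, Pi.one_apply, Finset.sum_const,
    Finset.card_univ, smul_eq_mul, mul_one, Sym2.card_subtype_not_diag, Fintype.card_coe,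
    ht.card_eq] using colorable_sum_of_cover parts _ hcover hcol

end SimpleGraph

theorem fW_two (ω : ℕ) : fW 2 ω = (ω + 1).choose 2 := by
  simp [fW, Nat.choose_succ_succ, add_comm]

theorem colorable_fW {V : Type*} {G : SimpleGraph V} {p ω : ℕ}
    (hp : IsEmpty (pK2 (p + 1) ↪g G)) (hω : G.CliqueFree (ω + 1)) :
    G.Colorable (fW (p + 1) ω) := by
  induction p generalizing V with
  | zero =>
    exact colorable_one_iff.mpr (eq_bot_iff_forall_not_adj.mpr fun u v huv =>
      hp.false (pK2OneEmbeddingOfAdj huv))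
  | succ p ih =>
    obtain ⟨t, ht⟩ := G.exists_isNClique_cliqueNum
    have hcol := colorable_add_choose_mul_of_isNClique ht hω.cliqueFree_cliqueNum_succ fun u v huv =>
      ih (isEmpty_pK2_induce_missBoth hp huv) (hω.comap (Embedding.induce _).isContained)
    have hle : G.cliqueNum ≤ ω := Nat.le_of_lt_succ hω.cliqueNum_lt
    refine hcol.mono ?_
    calc _ ≤ ω + ω.choose 2 * fW (p + 1) ω := by gcongr
      _ = fW (p + 2) ω := add_comm _ _

theorem stmt_6 :
    (∀ p : ℕ, 1 ≤ p → ∀ (V : Type) [Fintype V] (G : SimpleGraph V),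
      IsEmpty (pK2 p ↪g G) → G.chromaticNumber ≤ (fW p G.cliqueNum : ℕ∞)) ∧
    (∀ (V : Type) [Fintype V] (G : SimpleGraph V),
      IsEmpty (pK2 2 ↪g G) →
        G.chromaticNumber ≤ (Nat.choose (G.cliqueNum + 1) 2 : ℕ∞)) := by
  refine ⟨fun p hp V _ G hG => ?_, fun V _ G hG => ?_⟩
  · obtain ⟨q, rfl⟩ := Nat.exists_eq_add_of_le' hp
    exact (colorable_fW hG G.cliqueFree_cliqueNum_succ).chromaticNumber_le
  · rw [← fW_two]
    exact (colorable_fW hG G.cliqueFree_cliqueNum_succ).chromaticNumber_le
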